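/- arXiv:1707.01426 — 7 statements merged into one kernel-verified Lean document; each statement's English description precedes it below -/
import Mathlib

section
/- Let x0, y0, z0 > 0. There exists a compatible resistance sequence (x_n, y_n, z_n)_{n≥0} of positive triples with initial triple (x0, y0, z0) if and only if, after a permutation of the three coordinates, x0 ≥ y0 = z0 (i.e., two of the three initial values are equal and do not exceed the third). Moreover, in that case the sequence satisfies x_n ≥ y_n = z_n > 0 for all n ≥ 0 (in the same coordinates). -/
/-!
With `s = x + y + z`, one step of the recursion multiplies `x - y` by `1 + (x + y) / (2 s) > 0`, so
equalities and inequalities between coordinates persist along a compatible sequence. If `x₀` is the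
largest coordinate it stays the largest, and then `|y_{n+1} - z_{n+1}| / s_{n+1}` is at least `9/8`
times `|y_n - z_n| / s_n`; being bounded by `1`, this ratio must vanish, so `y₀ = z₀`.

Conversely, a step maps `(t w, w, w)` to a triple of the same shape, whose ratio of the first
coordinate to the second is `(3t² + 6t + 1) / (4t + 6)`. This map sends `[1, ∞)` onto itself, and
inverting it explicitly, one step at a time, builds a compatible sequence from any `x₀ ≥ y₀ = z₀`.
-/

noncomputable section

/-- Δ-Y transfer term `φ(x; y, z) = (x+y)(x+z)/(2(x+y+z))`. -/
def phi (x y z : ℝ) : ℝ := (x + y) * (x + z) / (2 * (x + y + z))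

/-- A compatible resistance sequence of positive triples. -/
def IsCompat (X Y Z : ℕ → ℝ) : Prop :=
  (∀ n, 0 < X n ∧ 0 < Y n ∧ 0 < Z n) ∧
  ∀ n, X n = X (n + 1) + phi (X (n + 1)) (Y (n + 1)) (Z (n + 1)) ∧
       Y n = Y (n + 1) + phi (Y (n + 1)) (Z (n + 1)) (X (n + 1)) ∧
       Z n = Z (n + 1) + phi (Z (n + 1)) (X (n + 1)) (Y (n + 1))

open Filter Topology

lemma phi_comm (x y z : ℝ) : phi x y z = phi x z y := by
  unfold phi; ring

lemma add_phi_sub_add_phi (x y z : ℝ) (hs : x + y + z ≠ 0) :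
    x + phi x y z - (y + phi y z x) = (x - y) * (1 + (x + y) / (2 * (x + y + z))) := by
  have hs' : y + z + x ≠ 0 := by rwa [← add_rotate]
  unfold phi
  field_simp
  ring

lemma add_phi_add_add_phi (x y z : ℝ) (hs : x + y + z ≠ 0) :
    x + phi x y z + (y + phi y z x) + (z + phi z x y)
      = (3 * (x + y + z) ^ 2 + (x * y + y * z + z * x)) / (2 * (x + y + z)) := by
  have hs' : y + z + x ≠ 0 := by rwa [← add_rotate]
  have hs'' : z + x + y ≠ 0 := by rwa [add_rotate]
  unfold phi
  field_simp
  ring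

/-- With `s = x + y + z`, `y + z ≤ 2 x` means `y + z ≤ 2 s / 3`, which bounds the growth factor
`(2 s + y + z) / (3 s² + xy + yz + zx)` of `|y - z|` relative to `s` by `8 / (9 s)`. -/
lemma abs_sub_div_add_phi_le {x y z : ℝ} (hx : 0 < x) (hy : 0 < y) (hz : 0 < z)
    (h : y + z ≤ 2 * x) :
    |y + phi y z x - (z + phi z x y)| / (x + phi x y z + (y + phi y z x) + (z + phi z x y))
      ≤ 8 / 9 * (|y - z| / (x + y + z)) := by
  have hs : 0 < x + y + z := by positivity
  rw [add_phi_sub_add_phi y z x (by linarith), add_phi_add_add_phi x y z hs.ne', abs_mul,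
    abs_of_pos (by positivity : 0 < 1 + (y + z) / (2 * (y + z + x)))]
  have hd : 0 ≤ |y - z| := abs_nonneg _
  rw [div_le_iff₀ (by positivity)]
  field_simp
  nlinarith [mul_nonneg hd (mul_pos hx hy).le, mul_nonneg hd (mul_pos hy hz).le,
    mul_nonneg hd (mul_pos hz hx).le,
    mul_nonneg (mul_nonneg hd hs.le) (by linarith : 0 ≤ 2 * x - y - z)]

lemma nonpos_of_le_mul_succ {u : ℕ → ℝ} {c B : ℝ} (hc₀ : 0 ≤ c) (hc₁ : c < 1)
    (hu : ∀ n, u n ≤ c * u (n + 1)) (hB : ∀ n, u n ≤ B) : u 0 ≤ 0 := by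
  have hpow : ∀ n, u 0 ≤ c ^ n * u n := by
    intro n
    induction n with
    | zero => simp
    | succ n ih =>
      calc u 0 ≤ c ^ n * u n := ih
        _ ≤ c ^ n * (c * u (n + 1)) := mul_le_mul_of_nonneg_left (hu n) (by positivity)
        _ = c ^ (n + 1) * u (n + 1) := by ring
  have hlim : Tendsto (fun n => c ^ n * B) atTop (𝓝 0) := by
    simpa using (tendsto_pow_atTop_nhds_zero_of_lt_one hc₀ hc₁).mul_const B
  exact ge_of_tendsto' hlim fun n =>
    (hpow n).trans (mul_le_mul_of_nonneg_left (hB n) (by positivity))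

namespace IsCompat

variable {X Y Z : ℕ → ℝ}

lemma rotate (h : IsCompat X Y Z) : IsCompat Y Z X :=
  ⟨fun n => ⟨(h.1 n).2.1, (h.1 n).2.2, (h.1 n).1⟩, fun n => ⟨(h.2 n).2.1, (h.2 n).2.2, (h.2 n).1⟩⟩

lemma swap (h : IsCompat X Y Z) : IsCompat X Z Y := by
  refine ⟨fun n => ⟨(h.1 n).1, (h.1 n).2.2, (h.1 n).2.1⟩, fun n => ?_⟩
  obtain ⟨hX, hY, hZ⟩ := h.2 n
  exact ⟨by rwa [phi_comm], by rwa [phi_comm], by rwa [phi_comm]⟩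

lemma sum_pos (h : IsCompat X Y Z) (n : ℕ) : 0 < X n + Y n + Z n := by
  obtain ⟨hX, hY, hZ⟩ := h.1 n
  positivity

lemma sub_eq_mul (h : IsCompat X Y Z) (n : ℕ) :
    X n - Y n = (X (n + 1) - Y (n + 1))
      * (1 + (X (n + 1) + Y (n + 1)) / (2 * (X (n + 1) + Y (n + 1) + Z (n + 1)))) := by
  rw [(h.2 n).1, (h.2 n).2.1]
  exact add_phi_sub_add_phi _ _ _ (h.sum_pos _).ne'

lemma sub_factor_pos (h : IsCompat X Y Z) (n : ℕ) :
    0 < 1 + (X n + Y n) / (2 * (X n + Y n + Z n)) := by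
  obtain ⟨hX, hY, hZ⟩ := h.1 n
  positivity

lemma le_of_le (h : IsCompat X Y Z) (h₀ : Y 0 ≤ X 0) (n : ℕ) : Y n ≤ X n := by
  induction n with
  | zero => exact h₀
  | succ n ih =>
    have hprod : 0 ≤ (X (n + 1) - Y (n + 1)) * _ := (h.sub_eq_mul n) ▸ sub_nonneg.2 ih
    exact sub_nonneg.1 (nonneg_of_mul_nonneg_left hprod (h.sub_factor_pos (n + 1)))

lemma eq_of_eq (h : IsCompat X Y Z) (h₀ : X 0 = Y 0) (n : ℕ) : X n = Y n := by
  induction n with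
  | zero => exact h₀
  | succ n ih =>
    have hprod : (X (n + 1) - Y (n + 1)) * _ = 0 := (h.sub_eq_mul n) ▸ sub_eq_zero.2 ih
    exact sub_eq_zero.1 ((mul_eq_zero.1 hprod).resolve_right (h.sub_factor_pos (n + 1)).ne')

theorem eq_of_le_of_le (h : IsCompat X Y Z) (hY : Y 0 ≤ X 0) (hZ : Z 0 ≤ X 0) : Y 0 = Z 0 := by
  set r : ℕ → ℝ := fun n => |Y n - Z n| / (X n + Y n + Z n)
  have hstep : ∀ n, r n ≤ 8 / 9 * r (n + 1) := by
    intro n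
    obtain ⟨hX', hY', hZ'⟩ := h.1 (n + 1)
    have hdom : Y (n + 1) + Z (n + 1) ≤ 2 * X (n + 1) := by
      linarith [h.le_of_le hY (n + 1), h.swap.le_of_le hZ (n + 1)]
    have := abs_sub_div_add_phi_le hX' hY' hZ' hdom
    rwa [← (h.2 n).1, ← (h.2 n).2.1, ← (h.2 n).2.2] at this
  have hbound : ∀ n, r n ≤ 1 := by
    intro n
    obtain ⟨hX', hY', hZ'⟩ := h.1 n
    rw [div_le_one (h.sum_pos n), abs_le]
    constructor <;> linarith
  have hr₀ : r 0 ≤ 0 := nonpos_of_le_mul_succ (by norm_num) (by norm_num) hstep hbound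
  have : |Y 0 - Z 0| ≤ 0 := by simpa using (div_le_iff₀ (h.sum_pos 0)).1 hr₀
  exact sub_eq_zero.1 (abs_nonpos_iff.1 this)

theorem two_eq_le_third (h : IsCompat X Y Z) :
    (Y 0 = Z 0 ∧ Y 0 ≤ X 0) ∨ (Z 0 = X 0 ∧ Z 0 ≤ Y 0) ∨ (X 0 = Y 0 ∧ X 0 ≤ Z 0) := by
  rcases le_total (Y 0) (X 0) with hYX | hXY
  · rcases le_total (Z 0) (X 0) with hZX | hXZ
    · exact Or.inl ⟨h.eq_of_le_of_le hYX hZX, hYX⟩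
    · exact Or.inr (Or.inr ⟨h.rotate.rotate.eq_of_le_of_le hXZ (hYX.trans hXZ), hXZ⟩)
  · rcases le_total (Z 0) (Y 0) with hZY | hYZ
    · exact Or.inr (Or.inl ⟨h.rotate.eq_of_le_of_le hZY hXY, hZY⟩)
    · have hXZ := hXY.trans hYZ
      exact Or.inr (Or.inr ⟨h.rotate.rotate.eq_of_le_of_le hXZ hYZ, hXZ⟩)

end IsCompat

lemma mul_add_phi_self {t w : ℝ} (ht : 0 < t) (hw : 0 < w) :
    t * w + phi (t * w) w w
      = (3 * t ^ 2 + 6 * t + 1) / (4 * t + 6) * (w * (2 * t + 3) / (t + 2)) := by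
  unfold phi
  field_simp
  ring

lemma add_phi_mul_self {t w : ℝ} (ht : 0 < t) (hw : 0 < w) :
    w + phi w w (t * w) = w * (2 * t + 3) / (t + 2) := by
  unfold phi
  field_simp
  ring

/-- Inverse of the ratio map `t ↦ (3t² + 6t + 1) / (4t + 6)` of `mul_add_phi_self`: the larger root
of `3t² + 6t + 1 = r (4t + 6)`. -/
def ratioPreimage (r : ℝ) : ℝ := (2 * r - 3 + √(4 * r ^ 2 + 6 * r + 6)) / 3

lemma ratioPreimage_discr_nonneg (r : ℝ) : 0 ≤ 4 * r ^ 2 + 6 * r + 6 := by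
  nlinarith [sq_nonneg (4 * r + 3)]

lemma ratioPreimage_quadratic (r : ℝ) :
    3 * ratioPreimage r ^ 2 + 6 * ratioPreimage r + 1 = r * (4 * ratioPreimage r + 6) := by
  unfold ratioPreimage
  linear_combination (1 / 3 : ℝ) * Real.sq_sqrt (ratioPreimage_discr_nonneg r)

lemma one_le_ratioPreimage {r : ℝ} (hr : 1 ≤ r) : 1 ≤ ratioPreimage r := by
  unfold ratioPreimage
  nlinarith [Real.sq_sqrt (ratioPreimage_discr_nonneg r), Real.sqrt_nonneg (4 * r ^ 2 + 6 * r + 6)]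

def ratioSeq (r : ℝ) (n : ℕ) : ℝ := ratioPreimage^[n] r

lemma ratioSeq_succ (r : ℝ) (n : ℕ) : ratioSeq r (n + 1) = ratioPreimage (ratioSeq r n) :=
  Function.iterate_succ_apply' _ _ _

lemma one_le_ratioSeq {r : ℝ} (hr : 1 ≤ r) (n : ℕ) : 1 ≤ ratioSeq r n := by
  induction n with
  | zero => exact hr
  | succ n ih => rw [ratioSeq_succ]; exact one_le_ratioPreimage ih

lemma ratioSeq_eq_div {r : ℝ} (hr : 1 ≤ r) (n : ℕ) :
    ratioSeq r n = (3 * ratioSeq r (n + 1) ^ 2 + 6 * ratioSeq r (n + 1) + 1)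
      / (4 * ratioSeq r (n + 1) + 6) := by
  have := one_le_ratioSeq hr (n + 1)
  rw [eq_div_iff (by positivity), ratioSeq_succ, ratioPreimage_quadratic]

def scaleSeq (r w : ℝ) : ℕ → ℝ
  | 0 => w
  | n + 1 => scaleSeq r w n * (ratioSeq r (n + 1) + 2) / (2 * ratioSeq r (n + 1) + 3)

lemma scaleSeq_pos {r w : ℝ} (hr : 1 ≤ r) (hw : 0 < w) (n : ℕ) : 0 < scaleSeq r w n := by
  induction n with
  | zero => exact hw
  | succ n ih =>
    have := one_le_ratioSeq hr (n + 1)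
    rw [scaleSeq]
    positivity

lemma scaleSeq_eq_mul_div {r w : ℝ} (hr : 1 ≤ r) (n : ℕ) :
    scaleSeq r w n
      = scaleSeq r w (n + 1) * (2 * ratioSeq r (n + 1) + 3) / (ratioSeq r (n + 1) + 2) := by
  have := one_le_ratioSeq hr (n + 1)
  rw [scaleSeq]
  field_simp

theorem exists_isCompat_of_le {x y : ℝ} (hy : 0 < y) (h : y ≤ x) :
    ∃ X Y Z : ℕ → ℝ, IsCompat X Y Z ∧ X 0 = x ∧ Y 0 = y ∧ Z 0 = y := by
  have hr : 1 ≤ x / y := (one_le_div hy).2 h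
  set T := ratioSeq (x / y)
  set W := scaleSeq (x / y) y
  refine ⟨fun n => T n * W n, W, W, ⟨fun n => ?_, fun n => ?_⟩,
    div_mul_cancel₀ x hy.ne', rfl, rfl⟩
  · have := one_le_ratioSeq hr n
    have := scaleSeq_pos hr hy n
    exact ⟨by positivity, this, this⟩
  · have ht : 0 < T (n + 1) := one_pos.trans_le (one_le_ratioSeq hr (n + 1))
    have hw : 0 < W (n + 1) := scaleSeq_pos hr hy (n + 1)
    have hW : W n = W (n + 1) * (2 * T (n + 1) + 3) / (T (n + 1) + 2) := scaleSeq_eq_mul_div hr n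
    have hT : T n = (3 * T (n + 1) ^ 2 + 6 * T (n + 1) + 1) / (4 * T (n + 1) + 6) :=
      ratioSeq_eq_div hr n
    refine ⟨?_, ?_, ?_⟩
    · change T n * W n
        = T (n + 1) * W (n + 1) + phi (T (n + 1) * W (n + 1)) (W (n + 1)) (W (n + 1))
      rw [hT, hW, mul_add_phi_self ht hw]
    · rw [hW, add_phi_mul_self ht hw]
    · rw [hW, phi_comm, add_phi_mul_self ht hw]

theorem stmt0_general (x0 y0 z0 : ℝ) (hx : 0 < x0) (hy : 0 < y0) :
    ((∃ X Y Z : ℕ → ℝ, IsCompat X Y Z ∧ X 0 = x0 ∧ Y 0 = y0 ∧ Z 0 = z0) ↔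
      ((y0 = z0 ∧ y0 ≤ x0) ∨ (z0 = x0 ∧ z0 ≤ y0) ∨ (x0 = y0 ∧ x0 ≤ z0))) ∧
    (∀ X Y Z : ℕ → ℝ, IsCompat X Y Z → X 0 = x0 → Y 0 = y0 → Z 0 = z0 →
      y0 = z0 → y0 ≤ x0 → ∀ n, Y n = Z n ∧ Y n ≤ X n) := by
  refine ⟨⟨?_, ?_⟩, ?_⟩
  · rintro ⟨X, Y, Z, h, rfl, rfl, rfl⟩
    exact h.two_eq_le_third
  · rintro (⟨rfl, hle⟩ | ⟨rfl, hle⟩ | ⟨rfl, hle⟩)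
    · exact exists_isCompat_of_le hy hle
    · obtain ⟨X, Y, Z, h, hX, hY, hZ⟩ := exists_isCompat_of_le hx hle
      exact ⟨Z, X, Y, h.rotate.rotate, hZ, hX, hY⟩
    · obtain ⟨X, Y, Z, h, hX, hY, hZ⟩ := exists_isCompat_of_le hx hle
      exact ⟨Y, Z, X, h.rotate, hY, hZ, hX⟩
  · rintro X Y Z h rfl rfl rfl hYZ hYX n
    exact ⟨h.rotate.eq_of_eq hYZ n, h.le_of_le hYX n⟩

theorem stmt0 (x0 y0 z0 : ℝ) (hx : 0 < x0) (hy : 0 < y0) (hz : 0 < z0) :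
    ((∃ X Y Z : ℕ → ℝ, IsCompat X Y Z ∧ X 0 = x0 ∧ Y 0 = y0 ∧ Z 0 = z0) ↔
      ((y0 = z0 ∧ y0 ≤ x0) ∨ (z0 = x0 ∧ z0 ≤ y0) ∨ (x0 = y0 ∧ x0 ≤ z0))) ∧
    (∀ X Y Z : ℕ → ℝ, IsCompat X Y Z → X 0 = x0 → Y 0 = y0 → Z 0 = z0 →
      y0 = z0 → y0 ≤ x0 → ∀ n, Y n = Z n ∧ Y n ≤ X n) :=
  stmt0_general x0 y0 z0 hx hy
end
end

section
/- (Necessity part of Lemma 2.1.) Let (x_n, y_n, z_n)_{n≥0} be a compatible resistance sequence of positive triples. If x0 ≥ y0 ≥ z0, then y0 = z0. -/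
noncomputable section

lemma phi_diff_eq (a b c : ℝ) (hs : a + b + c ≠ 0) :
    (a + phi a b c) - (b + phi b c a) =
      (a - b) * ((2*(a+b+c) + (a+b)) / (2*(a+b+c))) := by
  have h1 : b + c + a ≠ 0 := by intro h; exact hs (by linarith)
  unfold phi
  field_simp
  ring

lemma phi_sum_eq (a b c : ℝ) (hs : a + b + c ≠ 0) :
    (a + phi a b c) + (b + phi b c a) =
      (a + b) * ((2*(a+b+c) + 2*c + (a+b)) / (2*(a+b+c))) := by
  have h1 : b + c + a ≠ 0 := by intro h; exact hs (by linarith)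
  unfold phi
  field_simp
  ring

theorem stmt2 (X Y Z : ℕ → ℝ) (hcompat : IsCompat X Y Z)
    (h1 : Y 0 ≤ X 0) (h2 : Z 0 ≤ Y 0) : Y 0 = Z 0 := by
  obtain ⟨hpos, hrec⟩ := hcompat
  by_contra hne
  have hd0 : 0 < Y 0 - Z 0 := sub_pos.mpr (lt_of_le_of_ne h2 fun h => hne h.symm)
  -- order propagates to all levels
  have horder : ∀ n, Y n ≤ X n ∧ Z n ≤ Y n := by
    intro n
    induction n with
    | zero => exact ⟨h1, h2⟩
    | succ n ih =>
      obtain ⟨ha, hb, hc⟩ := hpos (n+1)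
      have hs : (0:ℝ) < X (n+1) + Y (n+1) + Z (n+1) := by linarith
      have hs' : X (n+1) + Y (n+1) + Z (n+1) ≠ 0 := ne_of_gt hs
      obtain ⟨e1, e2, e3⟩ := hrec n
      constructor
      · by_contra h
        push_neg at h
        have hxy : X n - Y n =
            (X (n+1) - Y (n+1)) *
              ((2*(X (n+1)+Y (n+1)+Z (n+1)) + (X (n+1)+Y (n+1))) /
                (2*(X (n+1)+Y (n+1)+Z (n+1)))) := by
          rw [e1, e2]; exact phi_diff_eq _ _ _ hs'
        have hfac : (0:ℝ) < (2*(X (n+1)+Y (n+1)+Z (n+1)) + (X (n+1)+Y (n+1))) /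
            (2*(X (n+1)+Y (n+1)+Z (n+1))) :=
          div_pos (by linarith) (by linarith)
        have : X n - Y n < 0 := by
          rw [hxy]
          exact mul_neg_of_neg_of_pos (by linarith) hfac
        linarith [ih.1]
      · by_contra h
        push_neg at h
        have hs2 : Y (n+1) + Z (n+1) + X (n+1) ≠ 0 := by intro h'; exact hs' (by linarith)
        have hyz : Y n - Z n =
            (Y (n+1) - Z (n+1)) *
              ((2*(Y (n+1)+Z (n+1)+X (n+1)) + (Y (n+1)+Z (n+1))) /
                (2*(Y (n+1)+Z (n+1)+X (n+1)))) := by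
          rw [e2, e3]; exact phi_diff_eq _ _ _ hs2
        have hfac : (0:ℝ) < (2*(Y (n+1)+Z (n+1)+X (n+1)) + (Y (n+1)+Z (n+1))) /
            (2*(Y (n+1)+Z (n+1)+X (n+1))) :=
          div_pos (by linarith) (by linarith)
        have : Y n - Z n < 0 := by
          rw [hyz]
          exact mul_neg_of_neg_of_pos (by linarith) hfac
        linarith [ih.2]
  -- ratio grows geometrically
  have hr : ∀ n, (5/4:ℝ)^n * ((Y 0 - Z 0)/(Y 0 + Z 0)) ≤ (Y n - Z n)/(Y n + Z n) := by
    intro n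
    induction n with
    | zero => simp
    | succ n ih =>
      obtain ⟨ha, hb, hc⟩ := hpos (n+1)
      obtain ⟨e1, e2, e3⟩ := hrec n
      obtain ⟨hxy, hyz⟩ := horder (n+1)
      set a := X (n+1); set b := Y (n+1); set c := Z (n+1)
      have hs : (0:ℝ) < b + c + a := by linarith
      have hs' : b + c + a ≠ 0 := ne_of_gt hs
      have hd : Y n - Z n = (b - c) * ((2*(b+c+a) + (b+c)) / (2*(b+c+a))) := by
        rw [e2, e3]; exact phi_diff_eq _ _ _ hs'
      have hp : Y n + Z n = (b + c) * ((2*(b+c+a) + 2*a + (b+c)) / (2*(b+c+a))) := by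
        rw [e2, e3]; exact phi_sum_eq _ _ _ hs'
      have hK2pos : (0:ℝ) < (2*(b+c+a) + 2*a + (b+c)) / (2*(b+c+a)) :=
        div_pos (by linarith) (by linarith)
      have hK1pos : (0:ℝ) ≤ (2*(b+c+a) + (b+c)) / (2*(b+c+a)) :=
        le_of_lt (div_pos (by linarith) (by linarith))
      -- key step inequality
      have hstep : (Y n - Z n)/(Y n + Z n) ≤ (4/5) * ((b - c)/(b + c)) := by
        rw [hd, hp, mul_div_mul_comm]
        have hq : (0:ℝ) ≤ (b - c)/(b + c) := div_nonneg (by linarith) (by linarith)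
        have hratio : ((2*(b+c+a) + (b+c)) / (2*(b+c+a))) /
            ((2*(b+c+a) + 2*a + (b+c)) / (2*(b+c+a))) ≤ 4/5 := by
          rw [div_le_iff₀ hK2pos]
          rw [div_le_iff₀ (by linarith : (0:ℝ) < 2*(b+c+a))]
          have : (4:ℝ)/5 * ((2*(b+c+a) + 2*a + (b+c)) / (2*(b+c+a))) * (2*(b+c+a))
              = 4/5 * (2*(b+c+a) + 2*a + (b+c)) := by
            field_simp
          rw [this]
          -- need 2(b+c+a) + (b+c) ≤ (4/5)(2(b+c+a)+2a+(b+c)), i.e. 3(b+c) ≤ 6a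
          linarith
        have hratio0 : (0:ℝ) ≤ ((2*(b+c+a) + (b+c)) / (2*(b+c+a))) /
            ((2*(b+c+a) + 2*a + (b+c)) / (2*(b+c+a))) :=
          div_nonneg hK1pos (le_of_lt hK2pos)
        nlinarith [mul_le_mul_of_nonneg_left hratio hq]
      have h54 : (5/4:ℝ) * ((Y n - Z n)/(Y n + Z n)) ≤ (b - c)/(b + c) := by
        nlinarith [hstep]
      calc (5/4:ℝ)^(n+1) * ((Y 0 - Z 0)/(Y 0 + Z 0))
          = (5/4) * ((5/4)^n * ((Y 0 - Z 0)/(Y 0 + Z 0))) := by ring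
        _ ≤ (5/4) * ((Y n - Z n)/(Y n + Z n)) := by
            have := mul_le_mul_of_nonneg_left ih (by norm_num : (0:ℝ) ≤ 5/4)
            linarith
        _ ≤ (b - c)/(b + c) := h54
  -- get contradiction
  have hp0 : (0:ℝ) < Y 0 + Z 0 := by have := hpos 0; linarith [this.2.1, this.2.2]
  have hr0 : (0:ℝ) < (Y 0 - Z 0)/(Y 0 + Z 0) := div_pos hd0 hp0
  obtain ⟨n, hn⟩ := pow_unbounded_of_one_lt (1 / ((Y 0 - Z 0)/(Y 0 + Z 0)))
    (by norm_num : (1:ℝ) < 5/4)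
  have hlt1 : (Y n - Z n)/(Y n + Z n) < 1 := by
    obtain ⟨hxa, hyb, hzc⟩ := hpos n
    have : (0:ℝ) < Y n + Z n := by linarith
    rw [div_lt_one this]; linarith
  have : (1:ℝ) < (5/4)^n * ((Y 0 - Z 0)/(Y 0 + Z 0)) := by
    rw [div_lt_iff₀ hr0] at hn
    linarith [hn]
  linarith [hr n]
end
end

section
/- (Uniqueness part of Proposition 1.1.) Let x0 ≥ y0 = z0 > 0. If (x_n, y_n, z_n)_{n≥0} and (x'_n, y'_n, z'_n)_{n≥0} are two compatible resistance sequences of positive triples with the same initial triple (x0, y0, z0), then x_n = x'_n, y_n = y'_n and z_n = z'_n for all n ≥ 0; i.e., the compatible resistance sequence is uniquely determined by its initial triple. -/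
noncomputable section

/-!
Since `x + φ(x; y, z) = 3x/2 + yz/(2(x+y+z))`, the difference of the last two coordinates of the
backward map is `(y - z)(2x + 3y + 3z)/(2(x+y+z))`, so equality `y = z` is preserved when going
from level `n` to level `n + 1`. Both sequences therefore stay on the plane `y = z`, where the
backward map `(a, b) ↦ (3a/2 + b²/(2(a+2b)), 3b/2 + ab/(2(a+2b)))` is injective on positive pairs,
and uniqueness follows by induction on `n`.
-/

lemma add_phi_eq (x y z : ℝ) (h : x + y + z ≠ 0) :
    x + phi x y z = 3 / 2 * x + y * z / (2 * (x + y + z)) := by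
  unfold phi
  field_simp
  ring

lemma add_phi_sub_add_phi_s3 (a b c : ℝ) (h : a + b + c ≠ 0) :
    (b + phi b c a) - (c + phi c a b) = (b - c) * (2 * a + 3 * b + 3 * c) / (2 * (a + b + c)) := by
  have hb : b + c + a = a + b + c := by ring
  have hc : c + a + b = a + b + c := by ring
  unfold phi
  rw [hb, hc]
  field_simp
  ring

lemma eq_of_add_phi_eq_add_phi {a b c : ℝ} (ha : 0 < a) (hb : 0 < b) (hc : 0 < c)
    (h : b + phi b c a = c + phi c a b) : b = c := by
  have hdiff := add_phi_sub_add_phi_s3 a b c (by positivity)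
  rw [h, sub_self, eq_comm, div_eq_zero_iff, mul_eq_zero, sub_eq_zero] at hdiff
  exact (hdiff.resolve_right (by positivity)).resolve_right (by positivity)

lemma add_phi_injective_symm {a b a' b' : ℝ} (ha : 0 < a) (hb : 0 < b) (ha' : 0 < a')
    (hb' : 0 < b') (h₁ : a + phi a b b = a' + phi a' b' b')
    (h₂ : b + phi b b a = b' + phi b' b' a') : a = a' ∧ b = b' := by
  rw [add_phi_eq _ _ _ (by positivity), add_phi_eq _ _ _ (by positivity)] at h₁
  rw [add_phi_eq _ _ _ (by positivity), add_phi_eq _ _ _ (by positivity)] at h₂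
  field_simp at h₁ h₂
  -- The ratio of the two image coordinates is a strictly monotone function of `a / b`, so it
  -- determines `a / b`; homogeneity then fixes the scale.
  have hcross : (3 * a * (a + 2 * b) + b ^ 2) * (b' * (2 * a' + 3 * b')) =
      (3 * a' * (a' + 2 * b') + b' ^ 2) * (b * (2 * a + 3 * b)) := by
    refine mul_right_cancel₀ (b := a' + 2 * b') (by positivity) ?_
    linear_combination (b' * (2 * a' + 3 * b')) * h₁ -
      (3 * a' * (a' + 2 * b') + b' ^ 2) / 2 * h₂
  have hratio : a * b' = a' * b := by
    have hfac : (a * b' - a' * b) * (6 * a * a' + 9 * a * b' + 9 * a' * b + 16 * b * b') = 0 := by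
      linear_combination hcross
    have : 6 * a * a' + 9 * a * b' + 9 * a' * b + 16 * b * b' ≠ 0 := by positivity
    linear_combination (mul_eq_zero.1 hfac).resolve_right this
  have hbb : b = b' := by
    have hfac : (b - b') * (2 * a * a' + 7 * a * b' + 6 * b * b') = 0 := by
      linear_combination h₂ / 2 - (4 * b' - 3 * b) * hratio
    have : 2 * a * a' + 7 * a * b' + 6 * b * b' ≠ 0 := by positivity
    linear_combination (mul_eq_zero.1 hfac).resolve_right this
  subst hbb
  exact ⟨mul_right_cancel₀ hb.ne' (by linear_combination hratio), rfl⟩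

theorem IsCompat.eq_of_apply_zero_eq {X Y Z : ℕ → ℝ} (h : IsCompat X Y Z) (h₀ : Y 0 = Z 0) :
    Y = Z := by
  obtain ⟨hpos, hrec⟩ := h
  funext n
  induction n with
  | zero => exact h₀
  | succ n ih =>
    obtain ⟨hx, hy, hz⟩ := hpos (n + 1)
    exact eq_of_add_phi_eq_add_phi hx hy hz (by rw [← (hrec n).2.1, ← (hrec n).2.2, ih])

theorem IsCompat.unique_of_symm {X Y X' Y' : ℕ → ℝ} (h : IsCompat X Y Y) (h' : IsCompat X' Y' Y')
    (hX : X 0 = X' 0) (hY : Y 0 = Y' 0) : X = X' ∧ Y = Y' := by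
  obtain ⟨hpos, hrec⟩ := h
  obtain ⟨hpos', hrec'⟩ := h'
  suffices ∀ n, X n = X' n ∧ Y n = Y' n from ⟨funext fun n ↦ (this n).1, funext fun n ↦ (this n).2⟩
  intro n
  induction n with
  | zero => exact ⟨hX, hY⟩
  | succ n ih =>
    exact add_phi_injective_symm (hpos (n + 1)).1 (hpos (n + 1)).2.1 (hpos' (n + 1)).1
      (hpos' (n + 1)).2.1 (by rw [← (hrec n).1, ← (hrec' n).1, ih.1])
      (by rw [← (hrec n).2.1, ← (hrec' n).2.1, ih.2])

theorem stmt3_general (x0 y0 z0 : ℝ) (heq : y0 = z0)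
    (X Y Z X' Y' Z' : ℕ → ℝ)
    (h : IsCompat X Y Z) (h' : IsCompat X' Y' Z')
    (hX0 : X 0 = x0) (hY0 : Y 0 = y0) (hZ0 : Z 0 = z0)
    (hX0' : X' 0 = x0) (hY0' : Y' 0 = y0) (hZ0' : Z' 0 = z0) :
    ∀ n, X n = X' n ∧ Y n = Y' n ∧ Z n = Z' n := by
  obtain rfl : Y = Z := h.eq_of_apply_zero_eq (by rw [hY0, hZ0, heq])
  obtain rfl : Y' = Z' := h'.eq_of_apply_zero_eq (by rw [hY0', hZ0', heq])
  obtain ⟨rfl, rfl⟩ := h.unique_of_symm h' (hX0.trans hX0'.symm) (hY0.trans hY0'.symm)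
  exact fun n ↦ ⟨rfl, rfl, rfl⟩

theorem stmt3 (x0 y0 z0 : ℝ) (hy : 0 < y0) (heq : y0 = z0) (hle : y0 ≤ x0)
    (X Y Z X' Y' Z' : ℕ → ℝ)
    (h : IsCompat X Y Z) (h' : IsCompat X' Y' Z')
    (hX0 : X 0 = x0) (hY0 : Y 0 = y0) (hZ0 : Z 0 = z0)
    (hX0' : X' 0 = x0) (hY0' : Y' 0 = y0) (hZ0' : Z' 0 = z0) :
    ∀ n, X n = X' n ∧ Y n = Y' n ∧ Z n = Z' n :=
  stmt3_general x0 y0 z0 heq X Y Z X' Y' Z' h h' hX0 hY0 hZ0 hX0' hY0' hZ0'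
end
end

section
/- (One-step explicit solution, equation (2.3).) Let x0 ≥ y0 > 0 and set N = √(4x0² + 6x0y0 + 6y0²), x1 = (1/15)(14x0 + 3y0 − 2N), y1 = (1/5)(−2x0 + y0 + N). Then x1 ≥ y1 > 0, and the triples (x0, y0, y0) and (x1, y1, y1) satisfy the one-step compatibility equations: x0 = x1 + φ(x1; y1, y1) and y0 = y1 + φ(y1; y1, x1). -/
noncomputable section

/-!
Once the denominator `2 (x1 + 2 y1)` is cleared, both compatibility equations are polynomial
identities modulo `N² = 4 x0² + 6 x0 y0 + 6 y0²`, so they hold for either root `N`.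
Positivity of `y1` is `N > 2 x0 - y0`, since `N² - (2 x0 - y0)² = 5 y0 (2 x0 + y0)`, and
`y1 ≤ x1` is `N ≤ 4 x0`, since `16 x0² - N² = 6 (x0 - y0) (2 x0 + y0)`.
-/

lemma two_mul_sub_lt_sqrt {x y : ℝ} (hx : 0 ≤ x) (hy : 0 < y) :
    2 * x - y < √(4 * x ^ 2 + 6 * x * y + 6 * y ^ 2) :=
  Real.lt_sqrt_of_sq_lt (by nlinarith)

lemma sqrt_le_four_mul {x y : ℝ} (hy : 0 ≤ y) (hxy : y ≤ x) :
    √(4 * x ^ 2 + 6 * x * y + 6 * y ^ 2) ≤ 4 * x :=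
  Real.sqrt_le_iff.mpr ⟨by linarith, by nlinarith⟩

section OneStep

variable {x0 y0 N x1 y1 : ℝ} (hN : N ^ 2 = 4 * x0 ^ 2 + 6 * x0 * y0 + 6 * y0 ^ 2)
  (hx1 : x1 = (14 * x0 + 3 * y0 - 2 * N) / 15) (hy1 : y1 = (-2 * x0 + y0 + N) / 5)
  (hden : x1 + 2 * y1 ≠ 0)
include hN hx1 hy1 hden

lemma add_phi_eq_of_sq_eq_left : x1 + phi x1 y1 y1 = x0 := by
  have h2 : 2 * (x1 + y1 + y1) ≠ 0 := by contrapose! hden; linarith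
  rw [phi, add_div' _ _ _ h2, div_eq_iff h2]
  subst hx1 hy1
  linear_combination (-1 / 15 : ℝ) * hN

lemma add_phi_eq_of_sq_eq_right : y1 + phi y1 y1 x1 = y0 := by
  have h2 : 2 * (y1 + y1 + x1) ≠ 0 := by contrapose! hden; linarith
  rw [phi, add_div' _ _ _ h2, div_eq_iff h2]
  subst hx1 hy1
  linear_combination (2 / 15 : ℝ) * hN

end OneStep

theorem stmt4 (x0 y0 : ℝ) (hy : 0 < y0) (hle : y0 ≤ x0)
    (N x1 y1 : ℝ)
    (hN : N = Real.sqrt (4 * x0 ^ 2 + 6 * x0 * y0 + 6 * y0 ^ 2))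
    (hx1 : x1 = (14 * x0 + 3 * y0 - 2 * N) / 15)
    (hy1 : y1 = (-2 * x0 + y0 + N) / 5) :
    0 < y1 ∧ y1 ≤ x1 ∧
    x0 = x1 + phi x1 y1 y1 ∧ y0 = y1 + phi y1 y1 x1 := by
  have hx0 : 0 ≤ x0 := hy.le.trans hle
  have hlow : 2 * x0 - y0 < N := hN ▸ two_mul_sub_lt_sqrt hx0 hy
  have hup : N ≤ 4 * x0 := hN ▸ sqrt_le_four_mul hy.le hle
  have hsq : N ^ 2 = 4 * x0 ^ 2 + 6 * x0 * y0 + 6 * y0 ^ 2 := by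
    rw [hN, Real.sq_sqrt (by positivity)]
  have hy1pos : 0 < y1 := by rw [hy1]; linarith
  have hy1x1 : y1 ≤ x1 := by rw [hx1, hy1]; linarith
  have hden : x1 + 2 * y1 ≠ 0 := (by linarith : 0 < x1 + 2 * y1).ne'
  exact ⟨hy1pos, hy1x1, (add_phi_eq_of_sq_eq_left hsq hx1 hy1 hden).symm,
    (add_phi_eq_of_sq_eq_right hsq hx1 hy1 hden).symm⟩
end
end

section
/- (Lemma 2.2, explicit form of the sequence.) Let (x_n, y_n, z_n)_{n≥0} be a compatible resistance sequence of positive triples with x0 ≥ y0 = z0. Then y_n = z_n for every n ≥ 0, and for every n ≥ 1: x_n = (1/15)(14x_{n−1} + 3y_{n−1} − 2√(4x_{n−1}² + 6x_{n−1}y_{n−1} + 6y_{n−1}²)) and y_n = (1/5)(−2x_{n−1} + y_{n−1} + √(4x_{n−1}² + 6x_{n−1}y_{n−1} + 6y_{n−1}²)). -/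
noncomputable section

theorem stmt5 (X Y Z : ℕ → ℝ) (hcompat : IsCompat X Y Z)
    (heq : Y 0 = Z 0) (hle : Y 0 ≤ X 0) :
    (∀ n, Y n = Z n) ∧
    (∀ n, X (n + 1) =
        (14 * X n + 3 * Y n -
          2 * Real.sqrt (4 * (X n) ^ 2 + 6 * X n * Y n + 6 * (Y n) ^ 2)) / 15 ∧
      Y (n + 1) =
        (-2 * X n + Y n +
          Real.sqrt (4 * (X n) ^ 2 + 6 * X n * Y n + 6 * (Y n) ^ 2)) / 5) := by
  obtain ⟨hpos, hrec⟩ := hcompat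
  -- first: Y n = Z n for all n, by induction
  have hYZ : ∀ n, Y n = Z n := by
    intro n
    induction n with
    | zero => exact heq
    | succ n ih =>
      obtain ⟨hx, hy, hz⟩ := hpos (n + 1)
      obtain ⟨_, hY, hZ⟩ := hrec n
      set x := X (n + 1); set y := Y (n + 1); set z := Z (n + 1)
      have hS : (2 : ℝ) * (x + y + z) ≠ 0 := by positivity
      have hS' : (2 : ℝ) * (y + z + x) ≠ 0 := by
        have : y + z + x = x + y + z := by ring
        rw [this]; exact hS
      have key : Y n - Z n =
          (y - z) * (1 + (y + z) / (2 * (x + y + z))) := by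
        rw [hY, hZ]
        unfold phi
        field_simp
        ring
      have hfac : 0 < 1 + (y + z) / (2 * (x + y + z)) := by positivity
      have h0 : (y - z) * (1 + (y + z) / (2 * (x + y + z))) = 0 := by
        rw [← key, ih]; ring
      rcases mul_eq_zero.mp h0 with h | h
      · linarith
      · linarith
  refine ⟨hYZ, fun n => ?_⟩
  obtain ⟨hx, hy, hz⟩ := hpos (n + 1)
  obtain ⟨hXr, hYr, _⟩ := hrec n
  have hyz := hYZ (n + 1)
  set x := X (n + 1) with hxdef
  set y := Y (n + 1) with hydef
  rw [← hyz] at hXr hYr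
  have hS : x + 2 * y ≠ 0 := by positivity
  have ha : X n = (3 * x ^ 2 + 6 * x * y + y ^ 2) / (2 * (x + 2 * y)) := by
    rw [hXr]; unfold phi
    have : (2 : ℝ) * (x + y + y) ≠ 0 := by positivity
    field_simp
    ring
  have hb : Y n = y * (2 * x + 3 * y) / (x + 2 * y) := by
    rw [hYr]; unfold phi
    have : (2 : ℝ) * (y + y + x) ≠ 0 := by positivity
    field_simp
    ring
  have hsqrt : Real.sqrt (4 * (X n) ^ 2 + 6 * X n * Y n + 6 * (Y n) ^ 2) =
      (3 * x ^ 2 + 9 * x * y + 8 * y ^ 2) / (x + 2 * y) := by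
    have hval : 4 * (X n) ^ 2 + 6 * X n * Y n + 6 * (Y n) ^ 2 =
        ((3 * x ^ 2 + 9 * x * y + 8 * y ^ 2) / (x + 2 * y)) ^ 2 := by
      rw [ha, hb]
      field_simp
      ring
    rw [hval]
    exact Real.sqrt_sq (by positivity)
  constructor
  · rw [hsqrt, ha, hb]
    field_simp
    ring
  · rw [hsqrt, ha, hb]
    field_simp
    ring
end
end

section
/- (Claim (iii) in the proof of Lemma 2.1.) Let (x0, y0, z0) and (x1, y1, z1) be a one-step compatible pair of positive triples, and suppose 2x0 > y0 + z0. Set λ0 = 2x0/(y0 + z0) and ρ = (1/5)(6 − 1/λ0). Then λ0 > 1, ρ > 1, and 2x1/(y1 + z1) ≥ λ0 · ρ. -/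
noncomputable section

/-- A one-step compatible pair of positive triples. -/
def OneStep (x0 y0 z0 x1 y1 z1 : ℝ) : Prop :=
  0 < x0 ∧ 0 < y0 ∧ 0 < z0 ∧ 0 < x1 ∧ 0 < y1 ∧ 0 < z1 ∧
  x0 = x1 + phi x1 y1 z1 ∧ y0 = y1 + phi y1 z1 x1 ∧ z0 = z1 + phi z1 x1 y1

theorem stmt8 (x0 y0 z0 x1 y1 z1 : ℝ) (h : OneStep x0 y0 z0 x1 y1 z1)
    (hgt : y0 + z0 < 2 * x0)
    (lam0 rho : ℝ) (hlam : lam0 = 2 * x0 / (y0 + z0))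
    (hrho : rho = (6 - 1 / lam0) / 5) :
    1 < lam0 ∧ 1 < rho ∧ lam0 * rho ≤ 2 * x1 / (y1 + z1) := by
  obtain ⟨hx0, hy0, hz0, hx1, hy1, hz1, hx, hy, hz⟩ := h
  have hyz0 : 0 < y0 + z0 := by linarith
  have hs : 0 < x1 + y1 + z1 := by linarith
  have hu : 0 < y1 + z1 := by linarith
  have hlam1 : 1 < lam0 := by
    rw [hlam, lt_div_iff₀ hyz0]; linarith
  have hlam0 : 0 < lam0 := by linarith
  have hrho1 : 1 < rho := by
    rw [hrho]
    have : 1 / lam0 < 1 := by rw [div_lt_one hlam0]; exact hlam1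
    linarith
  refine ⟨hlam1, hrho1, ?_⟩
  have hs2 : (0:ℝ) < 2 * (x1 + y1 + z1) := by positivity
  have e1 : x0 * (2 * (x1 + y1 + z1)) =
      2 * x1 * (x1 + y1 + z1) + (x1 + y1) * (x1 + z1) := by
    rw [hx, phi]; field_simp
  have e2 : (y0 + z0) * (2 * (x1 + y1 + z1)) =
      (y1 + z1) * (4 * x1 + 3 * (y1 + z1)) := by
    rw [hy, hz, phi, phi]; field_simp; ring
  have hD : 0 < (y1 + z1) * (4 * x1 + 3 * (y1 + z1)) := by positivity
  have hN : 0 < 6 * x1 ^ 2 + 6 * x1 * (y1 + z1) + 2 * (y1 * z1) := by positivity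
  have hgt' : (y1 + z1) * (4 * x1 + 3 * (y1 + z1)) <
      6 * x1 ^ 2 + 6 * x1 * (y1 + z1) + 2 * (y1 * z1) := by
    nlinarith [mul_lt_mul_of_pos_right hgt hs2, e1, e2]
  have hlamND : lam0 = (6 * x1 ^ 2 + 6 * x1 * (y1 + z1) + 2 * (y1 * z1)) /
      ((y1 + z1) * (4 * x1 + 3 * (y1 + z1))) := by
    rw [hlam, div_eq_div_iff hyz0.ne' hD.ne']
    linear_combination 2 * (y0 + z0) * e1 - 2 * x0 * e2
  have hlr : lam0 * rho = (6 * (6 * x1 ^ 2 + 6 * x1 * (y1 + z1) + 2 * (y1 * z1))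
      - (y1 + z1) * (4 * x1 + 3 * (y1 + z1))) / (5 * ((y1 + z1) * (4 * x1 + 3 * (y1 + z1)))) := by
    rw [hrho, hlamND]
    field_simp
  rw [hlr, div_le_div_iff₀ (by positivity) hu]
  nlinarith [sub_pos.mpr hgt', hx1, hu, mul_pos (sub_pos.mpr hgt') hu,
    mul_nonneg (mul_nonneg hx1.le hu.le) (sq_nonneg (y1 - z1)),
    mul_nonneg (mul_nonneg hu.le hu.le) (sq_nonneg (y1 - z1)),
    mul_pos hx1 hu, sq_nonneg (y1 - z1),
    mul_pos (mul_pos (sub_pos.mpr hgt') hu) hx1]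
end
end

section
/- (Iterated growth estimate, equation (2.8).) Let (x_n, y_n, z_n)_{n≥0} be a compatible resistance sequence of positive triples with x0 ≥ y0 > z0. Set λ0 = 2x0/(y0 + z0) and ρ = (1/5)(6 − 1/λ0). Then λ0 > 1, ρ > 1, and for every n ≥ 0: 2x_n/(y_n + z_n) ≥ λ0 · ρ^n; in particular 2x_n/(y_n + z_n) → ∞ as n → ∞. -/
noncomputable section

/-!
Write `μ = 2x/(y+z)` for a positive triple. One Δ-Y step turns `μ` into
`(3μ² + 6μ + 4yz/(y+z)²) / (2(2μ+3))`, which is at most `growthBound μ` since `4yz ≤ (y+z)²`.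
Along a compatible sequence the ratio at index `n` is therefore at most `growthBound` of the
ratio at `n + 1`. As `growthBound μ ≤ μ` exactly when `μ ≥ 1`, once the ratios exceed `λ₀ > 1`
they increase, and on `μ ≥ λ₀` the decreasing factor `growthBound μ / μ` is at most its value
at `λ₀`, which is `≤ 1/ρ` because `(6λ - 1)(3λ² + 6λ + 1) ≤ 10λ²(2λ + 3)` amounts to
`(λ - 1)²(2λ + 1) ≥ 0`.
-/

def growthBound (μ : ℝ) : ℝ := (3 * μ ^ 2 + 6 * μ + 1) / (2 * (2 * μ + 3))

lemma ratio_phi_eq {x y z : ℝ} (hx : 0 < x) (hy : 0 < y) (hz : 0 < z) :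
    2 * (x + phi x y z) / ((y + phi y z x) + (z + phi z x y)) =
      2 * (3 * x ^ 2 + 3 * x * (y + z) + y * z) / ((y + z) * (4 * x + 3 * (y + z))) := by
  unfold phi
  field_simp
  ring

lemma ratio_phi_le_growthBound {x y z : ℝ} (hx : 0 < x) (hy : 0 < y) (hz : 0 < z) :
    2 * (x + phi x y z) / ((y + phi y z x) + (z + phi z x y)) ≤
      growthBound (2 * x / (y + z)) := by
  rw [ratio_phi_eq hx hy hz, growthBound, div_le_div_iff₀ (by positivity) (by positivity)]
  field_simp
  nlinarith [sq_nonneg (y - z), mul_pos hx hy, mul_pos hx hz, mul_pos hy hz]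

lemma le_of_le_growthBound {a μ : ℝ} (ha : 1 < a) (hμ : 0 < μ) (h : a ≤ growthBound μ) :
    a ≤ μ := by
  rw [growthBound, le_div_iff₀ (by positivity)] at h
  nlinarith

lemma mul_growthBound_le {l μ : ℝ} (hl : 1 ≤ l) (hlμ : l ≤ μ) :
    (6 - 1 / l) / 5 * growthBound μ ≤ μ := by
  have hl0 : 0 < l := by linarith
  have hμ : 0 < μ := by linarith
  rw [growthBound, div_mul_div_comm, div_le_iff₀ (by positivity)]
  field_simp
  nlinarith [mul_nonneg (sub_nonneg.2 hlμ) (sub_nonneg.2 hl),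
    mul_nonneg (sub_nonneg.2 hl) (sub_nonneg.2 hl),
    mul_nonneg (mul_nonneg (sub_nonneg.2 hl) (sub_nonneg.2 hl)) (sub_nonneg.2 hl)]

lemma IsCompat.ratio_le_growthBound {X Y Z : ℕ → ℝ} (h : IsCompat X Y Z) (n : ℕ) :
    2 * X n / (Y n + Z n) ≤ growthBound (2 * X (n + 1) / (Y (n + 1) + Z (n + 1))) := by
  obtain ⟨hx, hy, hz⟩ := h.1 (n + 1)
  obtain ⟨ex, ey, ez⟩ := h.2 n
  rw [ex, ey, ez]
  exact ratio_phi_le_growthBound hx hy hz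

lemma IsCompat.ratio_pos {X Y Z : ℕ → ℝ} (h : IsCompat X Y Z) (n : ℕ) :
    0 < 2 * X n / (Y n + Z n) := by
  obtain ⟨hx, hy, hz⟩ := h.1 n
  positivity

theorem stmt9 (X Y Z : ℕ → ℝ) (hcompat : IsCompat X Y Z)
    (h1 : Y 0 ≤ X 0) (h2 : Z 0 < Y 0)
    (lam0 rho : ℝ) (hlam : lam0 = 2 * X 0 / (Y 0 + Z 0))
    (hrho : rho = (6 - 1 / lam0) / 5) :
    1 < lam0 ∧ 1 < rho ∧
    (∀ n, lam0 * rho ^ n ≤ 2 * X n / (Y n + Z n)) ∧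
    Filter.Tendsto (fun n => 2 * X n / (Y n + Z n)) Filter.atTop Filter.atTop := by
  set r : ℕ → ℝ := fun n => 2 * X n / (Y n + Z n)
  obtain ⟨hx0, hy0, hz0⟩ := hcompat.1 0
  have hlam1 : 1 < lam0 := by
    rw [hlam, lt_div_iff₀ (by positivity)]
    linarith
  have hrho1 : 1 < rho := by
    have : 1 / lam0 < 1 := (div_lt_one (by positivity)).2 hlam1
    linarith
  have hgrowth : ∀ n, lam0 * rho ^ n ≤ r n := by
    intro n
    induction n with
    | zero => simp [r, hlam]
    | succ n ih =>
      have hlam_le : lam0 ≤ r n :=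
        (le_mul_of_one_le_right (by positivity) (one_le_pow₀ hrho1.le)).trans ih
      have hmono : r n ≤ r (n + 1) := le_of_le_growthBound (hlam1.trans_le hlam_le)
        (hcompat.ratio_pos _) (hcompat.ratio_le_growthBound n)
      calc lam0 * rho ^ (n + 1) = rho * (lam0 * rho ^ n) := by ring
        _ ≤ rho * r n := by gcongr
        _ ≤ rho * growthBound (r (n + 1)) := by gcongr; exact hcompat.ratio_le_growthBound n
        _ ≤ r (n + 1) := hrho ▸ mul_growthBound_le hlam1.le (hlam_le.trans hmono)
  refine ⟨hlam1, hrho1, hgrowth, ?_⟩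
  exact Filter.tendsto_atTop_mono hgrowth
    ((tendsto_pow_atTop_atTop_of_one_lt hrho1).const_mul_atTop (by positivity))
end
end
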